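/- (Uniform entropy bound for the tail sums.) In the model below, the tail random variables X_N = Σ_{k=N+1}^{∞} a_k ε_{k,0} satisfy sup_{N ≥ 1} D(X_N) < ∞; that is, there exists a constant A > 0, depending only on κ, δ and the law of ε, such that D(X_N) ≤ A for all N. -/

import Mathlib

open MeasureTheory ProbabilityTheory Filter
open scoped ENNReal NNReal

/-- Differential entropy (base 2) of a probability measure `μ` on `ℝ` with density
`p = dμ/dx`: `h(μ) = −∫ p log₂ p`. -/
noncomputable def diffEnt (μ : Measure ℝ) : ℝ :=
  - ∫ x, (μ.rnDeriv MeasureTheory.volume x).toReal *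
      Real.logb 2 (μ.rnDeriv MeasureTheory.volume x).toReal

/-- The entropy gap `D(X) = h(W) − h(X)` where `W` is Gaussian with the same mean and
variance as `X`; here `h(W) = ½ log₂(2πe·Var X)` and `μ` is the law of `X`. -/
noncomputable def entGap (μ : Measure ℝ) : ℝ :=
  Real.logb 2 (2 * Real.pi * Real.exp 1 * variance id μ) / 2 - diffEnt μ

/-- `v_N = n_1 n_2 ⋯ n_N` (with `v_0 = 1`). -/
def vseq (n : ℕ → ℕ) (N : ℕ) : ℕ := ∏ i ∈ Finset.range N, n (i + 1)

/-- The tail sum `X_N = Σ_{k=N+1}^∞ a_k ε_{k,0}`. -/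
noncomputable def Xtail {Ω : Type*} (a : ℕ → ℝ) (ε : ℕ → ℕ → Ω → ℝ) (N : ℕ) (ω : Ω) : ℝ :=
  ∑' k : ℕ, a (N + 1 + k) * ε (N + 1 + k) 0 ω

/-!
Peel off the first term: `X_N = a_{N+1} ε_{N+1,0} + X_{N+1}` with independent summands.
Convolving with an independent variable cannot raise a density bound, so the law of `X_N` has
density at most `M / a_{N+1}`, where `M` bounds the density of `ε`, and hence
`h(X_N) ≥ -log₂ (M / a_{N+1})`.
On the other hand `v_{m+j} ≥ 2^j v_m` together with `a_k ≍ v_k^{-δ/2}` makes the `a_k` decay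
geometrically, so `|X_N| ≤ Σ_{k>N} a_k ≤ K a_{N+1}` and the comparison Gaussian has entropy at most
`½ log₂ (2πe K² a_{N+1}²)`. The scale `a_{N+1}` cancels in `D(X_N)`.
-/

section Decay

variable {δ κ : ℝ} {n : ℕ → ℕ} {a : ℕ → ℝ}

@[simp]
lemma vseq_zero : vseq n 0 = 1 := Finset.prod_range_zero _

lemma vseq_mul_two_pow_le (hn : ∀ k, 1 ≤ k → 2 ≤ n k) (m j : ℕ) :
    vseq n m * 2 ^ j ≤ vseq n (m + j) := by
  induction j with
  | zero => simp
  | succ j ih =>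
    calc vseq n m * 2 ^ (j + 1) = vseq n m * 2 ^ j * 2 := by ring
      _ ≤ vseq n (m + j) * n (m + j + 1) := Nat.mul_le_mul ih (hn _ (by omega))
      _ = vseq n (m + (j + 1)) := (Finset.prod_range_succ _ _).symm

lemma vseq_pos (hn : ∀ k, 1 ≤ k → 2 ≤ n k) (m : ℕ) : 0 < vseq n m := by
  have h := vseq_mul_two_pow_le hn 0 m
  rw [vseq_zero, one_mul, zero_add] at h
  exact (Nat.two_pow_pos m).trans_le h

lemma pos_of_mul_vseq_rpow_le (ha_pos : ∀ k, 0 < a k)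
    (ha_up : ∀ k, a k * (vseq n k : ℝ) ^ (δ / 2) ≤ κ) : 0 < κ := by
  have h := ha_up 0
  rw [vseq_zero, Nat.cast_one, Real.one_rpow, mul_one] at h
  exact (ha_pos 0).trans_le h

lemma le_geometric_of_vseq (hδ : 0 ≤ δ) (hn : ∀ k, 1 ≤ k → 2 ≤ n k) (ha_pos : ∀ k, 0 < a k)
    (ha_low : ∀ k, κ⁻¹ ≤ a k * (vseq n k : ℝ) ^ (δ / 2))
    (ha_up : ∀ k, a k * (vseq n k : ℝ) ^ (δ / 2) ≤ κ) (m j : ℕ) :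
    a (m + j) ≤ κ ^ 2 * a m * ((2 : ℝ) ^ (δ / 2))⁻¹ ^ j := by
  set w : ℕ → ℝ := fun k => (vseq n k : ℝ) ^ (δ / 2)
  have hw : ∀ k, 0 < w k := fun k => by have := vseq_pos hn k; positivity
  have hκ := pos_of_mul_vseq_rpow_le ha_pos ha_up
  have hgrowth : w m * ((2 : ℝ) ^ (δ / 2)) ^ j ≤ w (m + j) := by
    have hv : (vseq n m : ℝ) * 2 ^ j ≤ vseq n (m + j) := by
      exact_mod_cast vseq_mul_two_pow_le hn m j
    simp only [w]
    rw [Real.rpow_pow_comm zero_le_two, ← Real.mul_rpow (Nat.cast_nonneg _) (by positivity)]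
    exact Real.rpow_le_rpow (by positivity) hv (by linarith)
  have key : a (m + j) * ((2 : ℝ) ^ (δ / 2)) ^ j * w m ≤ κ ^ 2 * a m * w m :=
    calc a (m + j) * ((2 : ℝ) ^ (δ / 2)) ^ j * w m
        = a (m + j) * (w m * ((2 : ℝ) ^ (δ / 2)) ^ j) := by ring
      _ ≤ a (m + j) * w (m + j) := mul_le_mul_of_nonneg_left hgrowth (ha_pos _).le
      _ ≤ κ := ha_up _
      _ = κ ^ 2 * κ⁻¹ := by field_simp
      _ ≤ κ ^ 2 * (a m * w m) := by gcongr; exact ha_low m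
      _ = κ ^ 2 * a m * w m := by ring
  rw [inv_pow, ← div_eq_mul_inv, le_div_iff₀ (by positivity)]
  exact le_of_mul_le_mul_right key (hw m)

lemma summable_and_tsum_le_of_le_geometric {b : ℕ → ℝ} (hb : ∀ k, 0 ≤ b k) {C r : ℝ}
    (hr0 : 0 ≤ r) (hr1 : r < 1) (h : ∀ k, b k ≤ C * r ^ k) :
    Summable b ∧ ∑' k, b k ≤ C / (1 - r) := by
  have hgeom : Summable fun k => C * r ^ k := (summable_geometric_of_lt_one hr0 hr1).mul_left C
  have hb_summable : Summable b := hgeom.of_nonneg_of_le hb h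
  refine ⟨hb_summable, ?_⟩
  calc ∑' k, b k ≤ ∑' k, C * r ^ k := hb_summable.tsum_le_tsum h hgeom
    _ = C / (1 - r) := by rw [tsum_mul_left, tsum_geometric_of_lt_one hr0 hr1, div_eq_mul_inv]

lemma two_rpow_inv_lt_one {δ : ℝ} (hδ : 0 < δ) : ((2 : ℝ) ^ (δ / 2))⁻¹ < 1 :=
  inv_lt_one_of_one_lt₀ (Real.one_lt_rpow one_lt_two (by positivity))

/-- `κ² Σ_{j ≥ 0} 2^{-jδ/2}` in closed form. -/
noncomputable def tailConst (δ κ : ℝ) : ℝ := κ ^ 2 / (1 - ((2 : ℝ) ^ (δ / 2))⁻¹)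

lemma summable_and_tsum_nat_add_le (hδ : 0 < δ) (hn : ∀ k, 1 ≤ k → 2 ≤ n k)
    (ha_pos : ∀ k, 0 < a k) (ha_low : ∀ k, κ⁻¹ ≤ a k * (vseq n k : ℝ) ^ (δ / 2))
    (ha_up : ∀ k, a k * (vseq n k : ℝ) ^ (δ / 2) ≤ κ) (m : ℕ) :
    Summable (fun j => a (m + j)) ∧ ∑' j, a (m + j) ≤ tailConst δ κ * a m := by
  simpa only [tailConst, div_mul_eq_mul_div, mul_comm (a m)] using
    summable_and_tsum_le_of_le_geometric (fun j => (ha_pos _).le) (by positivity)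
      (two_rpow_inv_lt_one hδ) (le_geometric_of_vseq hδ.le hn ha_pos ha_low ha_up m)

lemma summable_of_vseq (hδ : 0 < δ) (hn : ∀ k, 1 ≤ k → 2 ≤ n k) (ha_pos : ∀ k, 0 < a k)
    (ha_low : ∀ k, κ⁻¹ ≤ a k * (vseq n k : ℝ) ^ (δ / 2))
    (ha_up : ∀ k, a k * (vseq n k : ℝ) ^ (δ / 2) ≤ κ) : Summable a := by
  simpa using (summable_and_tsum_nat_add_le hδ hn ha_pos ha_low ha_up 0).1

lemma tailConst_pos (hδ : 0 < δ) (ha_pos : ∀ k, 0 < a k)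
    (ha_up : ∀ k, a k * (vseq n k : ℝ) ^ (δ / 2) ≤ κ) : 0 < tailConst δ κ :=
  have := pos_of_mul_vseq_rpow_le ha_pos ha_up
  div_pos (by positivity) (sub_pos.2 (two_rpow_inv_lt_one hδ))

end Decay

lemma withDensity_le_ofReal_smul {α : Type*} [MeasurableSpace α] {μ : Measure α}
    {f : α → ℝ≥0∞} {M : ℝ≥0∞} (hM : M ≠ ∞) (hf : ∀ x, f x ≤ M) {C : ℝ} (hMC : M.toReal ≤ C) :
    μ.withDensity f ≤ ENNReal.ofReal C • μ := by
  rw [← withDensity_const]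
  refine withDensity_mono (ae_of_all _ fun x => (hf x).trans ?_)
  exact (ENNReal.le_ofReal_iff_toReal_le hM (ENNReal.toReal_nonneg.trans hMC)).2 hMC

namespace MeasureTheory.Measure

lemma conv_le_smul_of_le_smul {G : Type*} [AddGroup G] [MeasurableSpace G] [MeasurableAdd₂ G]
    {μ ν ρ : Measure G} [SFinite μ] [IsProbabilityMeasure ν] [ρ.IsAddRightInvariant]
    {c : ℝ≥0∞} (h : μ ≤ c • ρ) : μ ∗ ν ≤ c • ρ := by
  refine Measure.le_iff.2 fun s hs => ?_
  rw [conv, map_apply measurable_add hs, prod_apply_symm (measurable_add hs)]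
  calc ∫⁻ y, μ ((fun x => (x, y)) ⁻¹' ((fun p : G × G => p.1 + p.2) ⁻¹' s)) ∂ν
      ≤ ∫⁻ _, (c • ρ) s ∂ν := lintegral_mono fun y => by
        rw [smul_apply, smul_eq_mul, ← measure_preimage_add_right ρ y s]
        exact h _
    _ = (c • ρ) s := by simp

lemma map_const_mul_le_smul_volume {μ : Measure ℝ} {C : ℝ} (hC : 0 ≤ C)
    (h : μ ≤ ENNReal.ofReal C • volume) {b : ℝ} (hb : 0 < b) :
    μ.map (b * ·) ≤ ENNReal.ofReal (C / b) • volume :=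
  calc μ.map (b * ·) ≤ (ENNReal.ofReal C • volume).map (b * ·) :=
        map_mono h (measurable_const_mul b)
    _ = ENNReal.ofReal (C / b) • volume := by
        rw [Measure.map_smul, Real.map_volume_mul_left hb.ne', smul_smul,
          ← ENNReal.ofReal_mul hC, abs_of_pos (inv_pos.2 hb), div_eq_mul_inv]

lemma rnDeriv_le_of_le_smul {α : Type*} [MeasurableSpace α] {μ ν : Measure α} [SigmaFinite ν]
    {c : ℝ≥0∞} (h : μ ≤ c • ν) : μ.rnDeriv ν ≤ᵐ[ν] fun _ => c :=
  ae_le_of_forall_setLIntegral_le_of_sigmaFinite (μ.measurable_rnDeriv ν) fun s hs _ => by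
    rw [setLIntegral_const]
    exact (setLIntegral_rnDeriv_le s).trans (h s)

end MeasureTheory.Measure

lemma ProbabilityTheory.IndepFun.map_add_le_smul {Ω G : Type*} [MeasurableSpace Ω]
    [AddGroup G] [MeasurableSpace G] [MeasurableAdd₂ G] {P : Measure Ω} [IsProbabilityMeasure P]
    {ρ : Measure G} [ρ.IsAddRightInvariant] {Y R : Ω → G} (hY : Measurable Y)
    (hR : Measurable R) (hYR : IndepFun Y R P) {c : ℝ≥0∞} (h : P.map Y ≤ c • ρ) :
    P.map (Y + R) ≤ c • ρ := by
  have := Measure.isProbabilityMeasure_map (μ := P) hR.aemeasurable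
  rw [hYR.map_add_eq_map_conv_map hY hR]
  exact Measure.conv_le_smul_of_le_smul h

lemma ProbabilityTheory.iIndepFun.indepFun_of_measurable_biSup_compl {Ω ι β γ : Type*}
    [MeasurableSpace Ω] [mβ : MeasurableSpace β] [MeasurableSpace γ] {P : Measure Ω}
    {f : ι → Ω → β} (hf : ∀ i, Measurable (f i)) (h : iIndepFun f P) (i : ι) {g : Ω → γ}
    (hg : Measurable[⨆ j ∈ ({i}ᶜ : Set ι), mβ.comap (f j)] g) : IndepFun (f i) g P := by
  have := indep_biSup_compl (fun j => (hf j).comap_le) h {i}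
  rw [iSup_singleton] at this
  exact indep_of_indep_of_le_right this (measurable_iff_comap_le.1 hg)

lemma Measurable.tsum_of_summable {Ω : Type*} {mΩ : MeasurableSpace Ω} {g : ℕ → Ω → ℝ}
    (hg : ∀ k, Measurable (g k)) (hsum : ∀ ω, Summable fun k => g k ω) :
    Measurable fun ω => ∑' k, g k ω :=
  measurable_of_tendsto_metrizable (fun _ => Finset.measurable_sum _ fun k _ => hg k)
    (tendsto_pi_nhds.2 fun ω => (hsum ω).hasSum.tendsto_sum_nat)

lemma neg_logb_le_diffEnt {ν : Measure ℝ} [IsProbabilityMeasure ν] {C : ℝ} (hC : 0 ≤ C)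
    (hν : ν ≤ ENNReal.ofReal C • volume) {S : Set ℝ} (hS : MeasurableSet S)
    (hS_vol : volume S ≠ ∞) (hνS : ν Sᶜ = 0) :
    -Real.logb 2 C ≤ diffEnt ν := by
  have hac : ν ≪ volume := Measure.absolutelyContinuous_of_le_smul hν
  set p : ℝ → ℝ := fun x => (ν.rnDeriv volume x).toReal
  have hp_meas : Measurable p := (ν.measurable_rnDeriv volume).ennreal_toReal
  have hp_le : ∀ᵐ x, p x ≤ C := by
    filter_upwards [Measure.rnDeriv_le_of_le_smul hν] with x hx
    exact ENNReal.toReal_le_of_le_ofReal hC hx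
  have hp_integral : ∫ x, p x = 1 := by
    rw [Measure.integral_toReal_rnDeriv hac, probReal_univ]
  have hp_zero : ∀ᵐ x, x ∉ S → p x = 0 := by
    have h := (setLIntegral_eq_zero_iff hS.compl (ν.measurable_rnDeriv volume)).1
      ((Measure.setLIntegral_rnDeriv hac _).trans hνS)
    filter_upwards [h] with x hx hxS
    simp [p, hx hxS]
  set φ : ℝ → ℝ := fun t => t * Real.logb 2 t
  have hφ : Continuous φ := by
    simpa only [φ, Real.logb, mul_div_assoc] using Real.continuous_mul_log.div_const (Real.log 2)
  obtain ⟨K, hK⟩ :=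
    (isCompact_Icc (a := (0 : ℝ)) (b := C)).exists_bound_of_continuousOn hφ.continuousOn
  -- Without the bounded support `p log₂ p` need not be integrable, and `diffEnt` would be junk.
  have hφp_int : Integrable (fun x => φ (p x)) := by
    refine IntegrableOn.integrable_of_ae_notMem_eq_zero (s := S) ?_ ?_
    · refine Measure.integrableOn_of_bounded hS_vol
        (hφ.measurable.comp hp_meas).aestronglyMeasurable (M := K) (ae_restrict_of_ae ?_)
      filter_upwards [hp_le] with x hx using hK _ ⟨ENNReal.toReal_nonneg, hx⟩
    · filter_upwards [hp_zero] with x hx hxS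
      simp [φ, hx hxS]
  have hφp_le : ∀ᵐ x, φ (p x) ≤ p x * Real.logb 2 C := by
    filter_upwards [hp_le] with x hx
    rcases (show 0 ≤ p x from ENNReal.toReal_nonneg).eq_or_lt with h0 | hpos
    · simp [φ, ← h0]
    · exact mul_le_mul_of_nonneg_left (Real.logb_le_logb_of_le one_lt_two hpos hx) hpos.le
  have h := integral_mono_ae hφp_int
    (Measure.integrable_toReal_rnDeriv.mul_const (Real.logb 2 C)) hφp_le
  rw [integral_mul_const, hp_integral, one_mul] at h
  change -Real.logb 2 C ≤ -∫ x, φ (p x)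
  linarith

lemma variance_id_pos {ν : Measure ℝ} [IsProbabilityMeasure ν] (hac : ν ≪ volume)
    (hν : MemLp id 2 ν) : 0 < variance id ν := by
  refine ENNReal.toReal_pos (fun h0 => ?_) (evariance_lt_top hν).ne
  set m : ℝ := ν[id]
  have h_compl : ν {m}ᶜ = 0 := ae_iff.1 ((evariance_eq_zero_iff aemeasurable_id).1 h0)
  have h_atom : ν {m} = 0 := hac (Real.volume_singleton)
  have := measure_union_le (μ := ν) {m} {m}ᶜ
  simp [h_compl, h_atom] at this

theorem entGap_le_of_le_smul_volume {ν : Measure ℝ} [IsProbabilityMeasure ν] {C s : ℝ}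
    (hC : 0 ≤ C) (hν : ν ≤ ENNReal.ofReal C • volume) (hsupp : ∀ᵐ x ∂ν, x ∈ Set.Icc (-s) s) :
    entGap ν ≤ Real.logb 2 (2 * Real.pi * Real.exp 1 * s ^ 2) / 2 + Real.logb 2 C := by
  have hL2 : MemLp id 2 ν :=
    MemLp.of_bound aestronglyMeasurable_id s (by filter_upwards [hsupp] with x hx using abs_le.2 hx)
  have hvar_pos := variance_id_pos (Measure.absolutelyContinuous_of_le_smul hν) hL2
  have hvar_le : variance id ν ≤ s ^ 2 :=
    calc variance id ν ≤ ((s - -s) / 2) ^ 2 := variance_le_sq_of_bounded hsupp aemeasurable_id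
      _ = s ^ 2 := by ring
  have hent := neg_logb_le_diffEnt hC hν measurableSet_Icc measure_Icc_lt_top.ne (ae_iff.1 hsupp)
  have hlog : Real.logb 2 (2 * Real.pi * Real.exp 1 * variance id ν)
      ≤ Real.logb 2 (2 * Real.pi * Real.exp 1 * s ^ 2) :=
    Real.logb_le_logb_of_le one_lt_two (by positivity) (by gcongr)
  rw [entGap]
  linarith

theorem entGap_le_of_le_smul_volume_of_scale {ν : Measure ℝ} [IsProbabilityMeasure ν] {C K b : ℝ}
    (hC : 0 < C) (hK : 0 < K) (hb : 0 < b) (hν : ν ≤ ENNReal.ofReal (C / b) • volume)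
    (hsupp : ∀ᵐ x ∂ν, x ∈ Set.Icc (-(K * b)) (K * b)) :
    entGap ν ≤ Real.logb 2 (2 * Real.pi * Real.exp 1 * K ^ 2) / 2 + Real.logb 2 C :=
  calc entGap ν
      ≤ Real.logb 2 (2 * Real.pi * Real.exp 1 * (K * b) ^ 2) / 2 + Real.logb 2 (C / b) :=
        entGap_le_of_le_smul_volume (by positivity) hν hsupp
    _ = Real.logb 2 (2 * Real.pi * Real.exp 1 * K ^ 2) / 2 + Real.logb 2 C := by
        rw [mul_pow, ← mul_assoc, Real.logb_mul (by positivity) (by positivity),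
          Real.logb_div hC.ne' hb.ne', Real.logb_pow]
        ring

section Xtail

variable {Ω : Type*} {a : ℕ → ℝ} {ε : ℕ → ℕ → Ω → ℝ}

lemma norm_mul_le_of_abs_le_one (ha : ∀ k, 0 ≤ a k) (hε : ∀ k ω, |ε k 0 ω| ≤ 1) (k : ℕ)
    (ω : Ω) : ‖a k * ε k 0 ω‖ ≤ a k := by
  rw [norm_mul, Real.norm_of_nonneg (ha _), Real.norm_eq_abs]
  exact mul_le_of_le_one_right (ha _) (hε _ _)

lemma summable_Xtail_terms (ha : ∀ k, 0 ≤ a k) (hsum : Summable a)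
    (hε : ∀ k ω, |ε k 0 ω| ≤ 1) (N : ℕ) (ω : Ω) :
    Summable fun k => a (N + 1 + k) * ε (N + 1 + k) 0 ω :=
  (hsum.comp_injective (add_right_injective (N + 1))).of_norm_bounded fun _ =>
    norm_mul_le_of_abs_le_one ha hε _ ω

lemma abs_Xtail_le (ha : ∀ k, 0 ≤ a k) (hsum : Summable a) (hε : ∀ k ω, |ε k 0 ω| ≤ 1)
    (N : ℕ) (ω : Ω) : |Xtail a ε N ω| ≤ ∑' k, a (N + 1 + k) :=
  tsum_of_norm_bounded (f := fun k => a (N + 1 + k) * ε (N + 1 + k) 0 ω)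
    (hsum.comp_injective (add_right_injective (N + 1))).hasSum fun _ =>
      norm_mul_le_of_abs_le_one ha hε _ ω

lemma Xtail_eq_add (ha : ∀ k, 0 ≤ a k) (hsum : Summable a) (hε : ∀ k ω, |ε k 0 ω| ≤ 1)
    (N : ℕ) : Xtail a ε N = (fun ω => a (N + 1) * ε (N + 1) 0 ω) + Xtail a ε (N + 1) := by
  funext ω
  rw [Pi.add_apply, Xtail, (summable_Xtail_terms ha hsum hε N ω).tsum_eq_zero_add, add_zero]
  congr 1
  exact tsum_congr fun k => by rw [show N + 1 + (k + 1) = N + 1 + 1 + k by omega]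

lemma measurable_Xtail_biSup_compl (ha : ∀ k, 0 ≤ a k) (hsum : Summable a)
    (hε : ∀ k ω, |ε k 0 ω| ≤ 1) (N : ℕ) :
    Measurable[⨆ i ∈ ({(N, 0)}ᶜ : Set (ℕ × ℕ)), MeasurableSpace.comap (ε i.1 i.2) inferInstance]
      (Xtail a ε N) := by
  refine Measurable.tsum_of_summable (fun k => Measurable.const_mul ?_ _)
    (summable_Xtail_terms ha hsum hε N)
  refine measurable_iff_comap_le.2 (le_biSup (fun i : ℕ × ℕ => MeasurableSpace.comap
    (ε i.1 i.2) inferInstance) (?_ : (N + 1 + k, 0) ∈ ({(N, 0)}ᶜ : Set (ℕ × ℕ))))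
  simp only [Set.mem_compl_iff, Set.mem_singleton_iff, Prod.mk.injEq]
  omega

lemma measurable_Xtail [MeasurableSpace Ω] (ha : ∀ k, 0 ≤ a k) (hsum : Summable a)
    (hε : ∀ k ω, |ε k 0 ω| ≤ 1) (hmeas : ∀ k j, Measurable (ε k j)) (N : ℕ) :
    Measurable (Xtail a ε N) :=
  (measurable_Xtail_biSup_compl ha hsum hε N).mono
    (iSup₂_le fun i _ => (hmeas i.1 i.2).comap_le) le_rfl

lemma map_Xtail_le_smul_volume [MeasureSpace Ω] [IsProbabilityMeasure (ℙ : Measure Ω)]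
    (ha : ∀ k, 0 < a k) (hsum : Summable a) (hε : ∀ k ω, |ε k 0 ω| ≤ 1)
    (hmeas : ∀ k j, Measurable (ε k j)) (hindep : iIndepFun (fun kj : ℕ × ℕ => ε kj.1 kj.2) ℙ)
    {με : Measure ℝ} (hlaw : ∀ k j, Measure.map (ε k j) ℙ = με) {C : ℝ} (hC : 0 ≤ C)
    (hμε : με ≤ ENNReal.ofReal C • volume) (N : ℕ) :
    Measure.map (Xtail a ε N) ℙ ≤ ENNReal.ofReal (C / a (N + 1)) • volume := by
  have ha' : ∀ k, 0 ≤ a k := fun k => (ha k).le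
  have hindep_R : IndepFun (ε (N + 1) 0) (Xtail a ε (N + 1)) ℙ :=
    hindep.indepFun_of_measurable_biSup_compl (fun i => hmeas i.1 i.2) (N + 1, 0)
      (measurable_Xtail_biSup_compl ha' hsum hε (N + 1))
  rw [Xtail_eq_add ha' hsum hε]
  refine IndepFun.map_add_le_smul ((hmeas _ _).const_mul _)
    (measurable_Xtail ha' hsum hε hmeas (N + 1))
    (hindep_R.comp (measurable_const_mul _) measurable_id) ?_
  change Measure.map ((a (N + 1) * ·) ∘ ε (N + 1) 0) ℙ ≤ _
  rw [← Measure.map_map (measurable_const_mul _) (hmeas _ _), hlaw]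
  exact Measure.map_const_mul_le_smul_volume hC hμε (ha _)

end Xtail

theorem entGap_tail_uniform_bound_general
    {Ω : Type*} [MeasureSpace Ω] [IsProbabilityMeasure (ℙ : Measure Ω)]
    (δ κ : ℝ) (hδ : 1 ≤ δ)
    (n : ℕ → ℕ) (hn : ∀ k, 1 ≤ k → 2 ≤ n k)
    (a : ℕ → ℝ) (ha_pos : ∀ k, 0 < a k)
    (ha_low : ∀ k, κ⁻¹ ≤ a k * (vseq n k : ℝ) ^ (δ / 2))
    (ha_up : ∀ k, a k * (vseq n k : ℝ) ^ (δ / 2) ≤ κ)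
    (ε : ℕ → ℕ → Ω → ℝ) (με : Measure ℝ) (ϵ : ℝ) (hϵ1 : ϵ < 1)
    (hmeas : ∀ k j, Measurable (ε k j))
    (hindep : iIndepFun (fun kj : ℕ × ℕ => ε kj.1 kj.2) ℙ)
    (hlaw : ∀ k j, Measure.map (ε k j) ℙ = με)
    (hval : ∀ k j ω, ε k j ω ∈ Set.Icc (-ϵ) ϵ)
    (hdens : ∃ (f : ℝ → ℝ≥0∞) (M : ℝ≥0∞), M ≠ ⊤ ∧ (∀ x, f x ≤ M) ∧
      με = MeasureTheory.volume.withDensity f) :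
    ∃ A : ℝ, 0 < A ∧ ∀ N : ℕ, 1 ≤ N →
      entGap (Measure.map (Xtail a ε N) ℙ) ≤ A := by
  obtain ⟨f, M, hM, hfM, rfl⟩ := hdens
  set C : ℝ := max M.toReal 1
  set K : ℝ := tailConst δ κ
  have hδ0 : 0 < δ := by linarith
  have hsum := summable_of_vseq hδ0 hn ha_pos ha_low ha_up
  have ha : ∀ k, 0 ≤ a k := fun k => (ha_pos k).le
  have hε : ∀ k ω, |ε k 0 ω| ≤ 1 := fun k ω =>
    abs_le.2 ⟨by linarith [(hval k 0 ω).1], by linarith [(hval k 0 ω).2]⟩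
  refine ⟨max (Real.logb 2 (2 * Real.pi * Real.exp 1 * K ^ 2) / 2 + Real.logb 2 C) 1,
    lt_max_of_lt_right one_pos, fun N _ => le_max_of_le_left ?_⟩
  have hX_meas := measurable_Xtail ha hsum hε hmeas N
  have := Measure.isProbabilityMeasure_map (μ := ℙ) hX_meas.aemeasurable
  refine entGap_le_of_le_smul_volume_of_scale (by positivity)
    (tailConst_pos hδ0 ha_pos ha_up) (ha_pos (N + 1))
    (map_Xtail_le_smul_volume ha_pos hsum hε hmeas hindep hlaw (by positivity)
      (withDensity_le_ofReal_smul hM hfM (le_max_left _ _)) N) ?_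
  exact (ae_map_iff hX_meas.aemeasurable measurableSet_Icc).2 (ae_of_all _ fun ω => abs_le.1
    ((abs_Xtail_le ha hsum hε N ω).trans
      (summable_and_tsum_nat_add_le hδ0 hn ha_pos ha_low ha_up (N + 1)).2))

/-- Uniform entropy bound for the tail sums: `sup_{N ≥ 1} D(X_N) < ∞`. -/
theorem entGap_tail_uniform_bound
    {Ω : Type*} [MeasureSpace Ω] [IsProbabilityMeasure (ℙ : Measure Ω)]
    (δ κ : ℝ) (hδ : 1 ≤ δ) (hκ : 1 ≤ κ)
    (n : ℕ → ℕ) (hn : ∀ k, 1 ≤ k → 2 ≤ n k)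
    (a : ℕ → ℝ) (ha_pos : ∀ k, 0 < a k) (ha_sum : ∑' k, a k = 1)
    (ha_low : ∀ k, κ⁻¹ ≤ a k * (vseq n k : ℝ) ^ (δ / 2))
    (ha_up : ∀ k, a k * (vseq n k : ℝ) ^ (δ / 2) ≤ κ)
    (ε : ℕ → ℕ → Ω → ℝ) (με : Measure ℝ) (ϵ : ℝ) (hϵ0 : 0 ≤ ϵ) (hϵ1 : ϵ < 1)
    (hmeas : ∀ k j, Measurable (ε k j))
    (hindep : iIndepFun (fun kj : ℕ × ℕ => ε kj.1 kj.2) ℙ)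
    (hlaw : ∀ k j, Measure.map (ε k j) ℙ = με)
    (hsymm : Measure.map (fun x => -x) με = με)
    (hval : ∀ k j ω, ε k j ω ∈ Set.Icc (-ϵ) ϵ)
    (hdens : ∃ (f : ℝ → ℝ≥0∞) (M : ℝ≥0∞), M ≠ ⊤ ∧ (∀ x, f x ≤ M) ∧
      με = MeasureTheory.volume.withDensity f) :
    ∃ A : ℝ, 0 < A ∧ ∀ N : ℕ, 1 ≤ N →
      entGap (Measure.map (Xtail a ε N) ℙ) ≤ A :=
  entGap_tail_uniform_bound_general δ κ hδ n hn a ha_pos ha_low ha_up ε με ϵ hϵ1 hmeas hindep hlaw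
    hval hdens
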